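/- arXiv:cond-mat/0508377 — 3 statements merged into one kernel-verified Lean document; each statement's English description precedes it below -/
import Mathlib

section
/- K⁺(λ) = (1/2)·K(λ+η,ξ⁺) is a c-number solution of the right reflection equation with the XXZ R-matrix: for all λ, μ ∈ ℂ for which all sinh- and cosh-denominators appearing are nonzero, R₁₂(−λ+μ)K⁺₁^{t₁}(λ)R₁₂(−λ−μ−2η)K⁺₂^{t₂}(μ) = K⁺₂^{t₂}(μ)R₁₂(−λ−μ−2η)K⁺₁^{t₁}(λ)R₁₂(−λ+μ) as operators on ℂ² ⊗ ℂ², where K⁺₁^{t₁} = (K⁺)ᵀ ⊗ I₂ and K⁺₂^{t₂} = I₂ ⊗ (K⁺)ᵀ. -/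
noncomputable section

open Complex Matrix Kronecker

/-- `b(λ) = sinh(λ)/sinh(λ+η)`. -/
def bf (η lam : ℂ) : ℂ := Complex.sinh lam / Complex.sinh (lam + η)

/-- `c(λ) = sinh(η)/sinh(λ+η)`. -/
def cf (η lam : ℂ) : ℂ := Complex.sinh η / Complex.sinh (lam + η)

/-- The XXZ R-matrix on ℂ² ⊗ ℂ². -/
def Rxxz (η lam : ℂ) : Matrix (Fin 2 × Fin 2) (Fin 2 × Fin 2) ℂ :=
  Matrix.of fun p q =>
    if p.1 = q.1 ∧ p.2 = q.2 then (if p.1 = p.2 then 1 else bf η lam)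
    else if p.1 = q.2 ∧ p.2 = q.1 then cf η lam else 0

def coth (z : ℂ) : ℂ := Complex.cosh z / Complex.sinh z

/-- `K(λ,ξ) = I₂ + tanh(λ)·coth(ξ)·σᶻ`. -/
def Kmat (lam ξ : ℂ) : Matrix (Fin 2) (Fin 2) ℂ :=
  1 + (Complex.tanh lam * coth ξ) • !![1, 0; 0, -1]

/-- `K ⊗ I₂`, i.e. K acting in the first tensor factor of ℂ² ⊗ ℂ². -/
def k1 (K : Matrix (Fin 2) (Fin 2) ℂ) : Matrix (Fin 2 × Fin 2) (Fin 2 × Fin 2) ℂ :=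
  K ⊗ₖ (1 : Matrix (Fin 2) (Fin 2) ℂ)

/-- `I₂ ⊗ K`, i.e. K acting in the second tensor factor of ℂ² ⊗ ℂ². -/
def k2 (K : Matrix (Fin 2) (Fin 2) ℂ) : Matrix (Fin 2 × Fin 2) (Fin 2 × Fin 2) ℂ :=
  (1 : Matrix (Fin 2) (Fin 2) ℂ) ⊗ₖ K

/-! Both `K`-matrices are diagonal. For diagonal `K`, the reflection equation with a six-vertex
`R`-matrix holds trivially on the weight spaces spanned by `|00⟩` and `|11⟩`, and on the span of
`|01⟩, |10⟩` it reduces to a single scalar identity, bilinear in the diagonal entries of the two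
`K`'s. For `K = I + tanh(a) coth(ξ) σᶻ` the parts of that identity of degree 0 and 2 in `coth ξ`
cancel identically, and the linear part is, up to a factor, the sum-to-product identity
`tanh a₂ (sinh u + sinh v) + tanh a₁ (sinh u - sinh v) = 0` for `u = a₂ - a₁`, `v = -(a₁ + a₂)`. -/

section SixVertex

variable {R : Type*} [CommRing R]

def sixVertex (b c : R) : Matrix (Fin 2 × Fin 2) (Fin 2 × Fin 2) R :=
  Matrix.of fun p q =>
    if p.1 = q.1 ∧ p.2 = q.2 then (if p.1 = p.2 then 1 else b)
    else if p.1 = q.2 ∧ p.2 = q.1 then c else 0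

theorem sixVertex_reflection_of_diagonal (b c b' c' p₁ q₁ p₂ q₂ : R)
    (h : p₂ * (b * c' * p₁ + c * b' * q₁) = q₂ * (c * b' * p₁ + b * c' * q₁)) :
    sixVertex b c * (diagonal ![p₁, q₁] ⊗ₖ 1) * sixVertex b' c' * (1 ⊗ₖ diagonal ![p₂, q₂]) =
      (1 ⊗ₖ diagonal ![p₂, q₂]) * sixVertex b' c' * (diagonal ![p₁, q₁] ⊗ₖ 1) *
        sixVertex b c := by
  ext ⟨i, j⟩ ⟨k, l⟩
  fin_cases i <;> fin_cases j <;> fin_cases k <;> fin_cases l <;>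
    simp [sixVertex, Matrix.mul_apply, Fintype.sum_prod_type, Fin.sum_univ_two,
      Matrix.one_apply, Matrix.diagonal_apply] <;>
    first | ring1 | linear_combination h | linear_combination -h

end SixVertex

theorem Rxxz_eq_sixVertex (η u : ℂ) : Rxxz η u = sixVertex (bf η u) (cf η u) := rfl

theorem transpose_smul_Kmat (s a ξ : ℂ) :
    (s • Kmat a ξ)ᵀ = diagonal ![s * (1 + tanh a * coth ξ), s * (1 - tanh a * coth ξ)] := by
  ext i j
  fin_cases i <;> fin_cases j <;> simp [Kmat] <;> ring

theorem tanh_mul_sinh_add_sinh_add_tanh_mul_sinh_sub_sinh (a₁ a₂ : ℂ)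
    (h₁ : cosh a₁ ≠ 0) (h₂ : cosh a₂ ≠ 0) :
    tanh a₂ * (sinh (a₂ - a₁) + sinh (-(a₁ + a₂))) +
      tanh a₁ * (sinh (a₂ - a₁) - sinh (-(a₁ + a₂))) = 0 := by
  have hsum : sinh (a₂ - a₁) + sinh (-(a₁ + a₂)) = -2 * sinh a₁ * cosh a₂ := by
    rw [sinh_neg, sinh_sub, sinh_add]; ring
  have hdiff : sinh (a₂ - a₁) - sinh (-(a₁ + a₂)) = 2 * cosh a₁ * sinh a₂ := by
    rw [sinh_neg, sinh_sub, sinh_add]; ring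
  rw [hsum, hdiff, tanh_eq_sinh_div_cosh, tanh_eq_sinh_div_cosh]
  field_simp
  ring

theorem Kmat_right_reflection (η ξ s a₁ a₂ : ℂ) (h₁ : cosh a₁ ≠ 0) (h₂ : cosh a₂ ≠ 0) :
    Rxxz η (a₂ - a₁) * k1 ((s • Kmat a₁ ξ)ᵀ) * Rxxz η (-(a₁ + a₂)) * k2 ((s • Kmat a₂ ξ)ᵀ) =
      k2 ((s • Kmat a₂ ξ)ᵀ) * Rxxz η (-(a₁ + a₂)) * k1 ((s • Kmat a₁ ξ)ᵀ) *
        Rxxz η (a₂ - a₁) := by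
  simp only [Rxxz_eq_sixVertex, transpose_smul_Kmat, k1, k2]
  apply sixVertex_reflection_of_diagonal
  simp only [bf, cf]
  linear_combination
    (2 * s ^ 2 * coth ξ * sinh η / (sinh (a₂ - a₁ + η) * sinh (-(a₁ + a₂) + η))) *
      tanh_mul_sinh_add_sinh_add_tanh_mul_sinh_sub_sinh a₁ a₂ h₁ h₂

theorem Kplus_right_reflection_general (η : ℂ) (ξp : ℂ) (lam mu : ℂ)
    (hc1 : Complex.cosh (lam + η) ≠ 0) (hc2 : Complex.cosh (mu + η) ≠ 0) :
    Rxxz η (-lam + mu) * k1 (((2:ℂ)⁻¹ • Kmat (lam + η) ξp)ᵀ) * Rxxz η (-lam - mu - 2 * η) *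
        k2 (((2:ℂ)⁻¹ • Kmat (mu + η) ξp)ᵀ) =
      k2 (((2:ℂ)⁻¹ • Kmat (mu + η) ξp)ᵀ) * Rxxz η (-lam - mu - 2 * η) *
        k1 (((2:ℂ)⁻¹ • Kmat (lam + η) ξp)ᵀ) * Rxxz η (-lam + mu) := by
  rw [show -lam + mu = (mu + η) - (lam + η) by ring,
    show -lam - mu - 2 * η = -((lam + η) + (mu + η)) by ring]
  exact Kmat_right_reflection η ξp 2⁻¹ _ _ hc1 hc2

/-- `K⁺(λ) = (1/2)·K(λ+η,ξ⁺)` is a c-number solution of the right reflection equation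
`R₁₂(−λ+μ)K⁺₁^{t₁}(λ)R₁₂(−λ−μ−2η)K⁺₂^{t₂}(μ) = K⁺₂^{t₂}(μ)R₁₂(−λ−μ−2η)K⁺₁^{t₁}(λ)R₁₂(−λ+μ)`,
where `K⁺₁^{t₁} = (K⁺)ᵀ ⊗ I₂` and `K⁺₂^{t₂} = I₂ ⊗ (K⁺)ᵀ`. -/
theorem Kplus_right_reflection (η : ℂ) (hη : Complex.sinh η ≠ 0)
    (ξp : ℂ) (hξp : Complex.sinh ξp ≠ 0) (lam mu : ℂ)
    (hc1 : Complex.cosh (lam + η) ≠ 0) (hc2 : Complex.cosh (mu + η) ≠ 0)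
    (hs1 : Complex.sinh (-lam + mu + η) ≠ 0)
    (hs2 : Complex.sinh (-lam - mu - η) ≠ 0) :
    Rxxz η (-lam + mu) * k1 (((2:ℂ)⁻¹ • Kmat (lam + η) ξp)ᵀ) * Rxxz η (-lam - mu - 2 * η) *
        k2 (((2:ℂ)⁻¹ • Kmat (mu + η) ξp)ᵀ) =
      k2 (((2:ℂ)⁻¹ • Kmat (mu + η) ξp)ᵀ) * Rxxz η (-lam - mu - 2 * η) *
        k1 (((2:ℂ)⁻¹ • Kmat (lam + η) ξp)ᵀ) * Rxxz η (-lam + mu) :=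
  Kplus_right_reflection_general η ξp lam mu hc1 hc2
end
end

section
/- (Commuting transfer matrices.) Let d, m⁺, m⁻ be positive integers and η ∈ ℂ. Let R : ℂ → End(ℂ^d ⊗ ℂ^d) satisfy, for all λ, μ, ν ∈ ℂ: the Yang–Baxter equation R₁₂(λ−μ)R₁₃(λ−ν)R₂₃(μ−ν) = R₂₃(μ−ν)R₁₃(λ−ν)R₁₂(λ−μ); P R(λ) P = R(λ); R(λ)^{t₁t₂} = R(λ); R(λ)R(−λ) = ρ(λ)·Id and R^{t₁}(λ)R^{t₁}(−λ−2η) = ρ̃(λ)·Id, where ρ(λ), ρ̃(λ) ∈ ℂ are nonzero for all λ. Let 𝒯⁻(λ) be a d×d matrix-valued function with entries in End(ℂ^{m⁻}) satisfying the left reflection equation, and 𝒯⁺(λ) a d×d matrix-valued function with entries in End(ℂ^{m⁺}) satisfying the right reflection equation. Define t(λ) = Σ_{α,β=1}^{d} 𝒯⁺(λ)_{αβ} ⊗ 𝒯⁻(λ)_{βα}, an operator on ℂ^{m⁺} ⊗ ℂ^{m⁻}. Then [t(λ), t(μ)] = 0 for all λ, μ ∈ ℂ. -/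
/- STATEMENT 4: Commuting boundary transfer matrices (Sklyanin). -/

noncomputable section

open Complex Matrix Kronecker

/-- The permutation operator P on ℂ^d ⊗ ℂ^d. -/
def Pd (d : ℕ) : Matrix (Fin d × Fin d) (Fin d × Fin d) ℂ :=
  Matrix.of fun p q => if p.1 = q.2 ∧ p.2 = q.1 then 1 else 0

/-- Partial transposition in the first tensor factor of ℂ^d ⊗ ℂ^d. -/
def pt1 {d : ℕ} (M : Matrix (Fin d × Fin d) (Fin d × Fin d) ℂ) :
    Matrix (Fin d × Fin d) (Fin d × Fin d) ℂ :=
  Matrix.of fun p q => M (q.1, p.2) (p.1, q.2)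

/-- Partial transposition in the second tensor factor of ℂ^d ⊗ ℂ^d. -/
def pt2 {d : ℕ} (M : Matrix (Fin d × Fin d) (Fin d × Fin d) ℂ) :
    Matrix (Fin d × Fin d) (Fin d × Fin d) ℂ :=
  Matrix.of fun p q => M (p.1, q.2) (q.1, p.2)

/-- Embedding of an operator on ℂ^d ⊗ ℂ^d into the factors 1,2 of ℂ^d ⊗ ℂ^d ⊗ ℂ^d. -/
def r12 {d : ℕ} (M : Matrix (Fin d × Fin d) (Fin d × Fin d) ℂ) :
    Matrix (Fin d × Fin d × Fin d) (Fin d × Fin d × Fin d) ℂ :=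
  Matrix.of fun p q => M (p.1, p.2.1) (q.1, q.2.1) * (if p.2.2 = q.2.2 then 1 else 0)

/-- Embedding into the factors 1,3. -/
def r13 {d : ℕ} (M : Matrix (Fin d × Fin d) (Fin d × Fin d) ℂ) :
    Matrix (Fin d × Fin d × Fin d) (Fin d × Fin d × Fin d) ℂ :=
  Matrix.of fun p q => M (p.1, p.2.2) (q.1, q.2.2) * (if p.2.1 = q.2.1 then 1 else 0)

/-- Embedding into the factors 2,3. -/
def r23 {d : ℕ} (M : Matrix (Fin d × Fin d) (Fin d × Fin d) ℂ) :
    Matrix (Fin d × Fin d × Fin d) (Fin d × Fin d × Fin d) ℂ :=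
  Matrix.of fun p q => M (p.2.1, p.2.2) (q.2.1, q.2.2) * (if p.1 = q.1 then 1 else 0)

/-- A complex matrix on ℂ^d ⊗ ℂ^d viewed as a matrix with entries in the operator
algebra `A` of the quantum space (i.e. tensored with the identity on the quantum space). -/
def liftR {d : ℕ} {A : Type} [Semiring A] [Algebra ℂ A]
    (R : Matrix (Fin d × Fin d) (Fin d × Fin d) ℂ) :
    Matrix (Fin d × Fin d) (Fin d × Fin d) A :=
  R.map (algebraMap ℂ A)

/-- `𝒯₁(λ)`: a d×d matrix of operators, its d×d indices placed in the first ℂ^d factor. -/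
def emb1 {d : ℕ} {A : Type} [Zero A] (M : Matrix (Fin d) (Fin d) A) :
    Matrix (Fin d × Fin d) (Fin d × Fin d) A :=
  Matrix.of fun p q => if p.2 = q.2 then M p.1 q.1 else 0

/-- `𝒯₂(λ)`: d×d indices placed in the second ℂ^d factor. -/
def emb2 {d : ℕ} {A : Type} [Zero A] (M : Matrix (Fin d) (Fin d) A) :
    Matrix (Fin d × Fin d) (Fin d × Fin d) A :=
  Matrix.of fun p q => if p.1 = q.1 then M p.2 q.2 else 0

/-- The left reflection equation for a d×d matrix-valued function with entries in `A`. -/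
def LeftRefl {d : ℕ} (R : ℂ → Matrix (Fin d × Fin d) (Fin d × Fin d) ℂ)
    {A : Type} [Semiring A] [Algebra ℂ A] [DecidableEq A]
    (𝒯 : ℂ → Matrix (Fin d) (Fin d) A) : Prop :=
  ∀ lam mu : ℂ,
    liftR (R (lam - mu)) * emb1 (𝒯 lam) * liftR (R (lam + mu)) * emb2 (𝒯 mu) =
      emb2 (𝒯 mu) * liftR (R (lam + mu)) * emb1 (𝒯 lam) * liftR (R (lam - mu))

/-- The right reflection equation for a d×d matrix-valued function with entries in `A`. -/
def RightRefl {d : ℕ} (η : ℂ) (R : ℂ → Matrix (Fin d × Fin d) (Fin d × Fin d) ℂ)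
    {A : Type} [Semiring A] [Algebra ℂ A] [DecidableEq A]
    (𝒯 : ℂ → Matrix (Fin d) (Fin d) A) : Prop :=
  ∀ lam mu : ℂ,
    liftR (R (-lam + mu)) * emb1 (𝒯 lam)ᵀ * liftR (R (-lam - mu - 2 * η)) * emb2 (𝒯 mu)ᵀ =
      emb2 (𝒯 mu)ᵀ * liftR (R (-lam - mu - 2 * η)) * emb1 (𝒯 lam)ᵀ * liftR (R (-lam + mu))

namespace SkAux

variable {d : ℕ} {A : Type} [Semiring A] [Algebra ℂ A]

/-- The pairing `⟨X,Y⟩ = ∑_{p,q} X p q * Y p q`. -/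
def pairB (X Y : Matrix (Fin d × Fin d) (Fin d × Fin d) A) : A :=
  ∑ p : Fin d × Fin d, ∑ q : Fin d × Fin d, X p q * Y p q

lemma liftR_apply (S : Matrix (Fin d × Fin d) (Fin d × Fin d) ℂ) (p q) :
    (liftR S : Matrix (Fin d × Fin d) (Fin d × Fin d) A) p q = algebraMap ℂ A (S p q) := rfl

lemma liftR_mul (S T : Matrix (Fin d × Fin d) (Fin d × Fin d) ℂ) :
    (liftR (S * T) : Matrix (Fin d × Fin d) (Fin d × Fin d) A) = liftR S * liftR T :=
  Matrix.map_mul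

lemma liftR_one : (liftR (1 : Matrix (Fin d × Fin d) (Fin d × Fin d) ℂ)
    : Matrix (Fin d × Fin d) (Fin d × Fin d) A) = 1 :=
  Matrix.map_one _ (map_zero _) (map_one _)

lemma liftR_smul_one (c : ℂ) :
    (liftR (c • (1 : Matrix (Fin d × Fin d) (Fin d × Fin d) ℂ))
      : Matrix (Fin d × Fin d) (Fin d × Fin d) A) = c • 1 := by
  ext p q
  simp [liftR, Matrix.one_apply, apply_ite (algebraMap ℂ A),
    Algebra.algebraMap_eq_smul_one]

lemma pt2_pt1 (M : Matrix (Fin d × Fin d) (Fin d × Fin d) ℂ) : pt2 (pt1 M) = Mᵀ := by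
  ext ⟨a, b⟩ ⟨c, e⟩
  rfl

lemma pt1_eq_pt2_transpose (M : Matrix (Fin d × Fin d) (Fin d × Fin d) ℂ) :
    pt1 M = pt2 Mᵀ := by
  ext ⟨a, b⟩ ⟨c, e⟩
  rfl

end SkAux
namespace SkAux
variable {d : ℕ}

lemma pt2_pt2 (M : Matrix (Fin d × Fin d) (Fin d × Fin d) ℂ) : pt2 (pt2 M) = M := by
  ext ⟨a, b⟩ ⟨c, e⟩
  rfl

end SkAux
namespace SkAux
variable {d : ℕ} {A : Type} [Semiring A] [Algebra ℂ A]

lemma tri_apply (P1 P2 : Matrix (Fin d) (Fin d) A)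
    (S : Matrix (Fin d × Fin d) (Fin d × Fin d) ℂ) (p q : Fin d × Fin d) :
    (emb1 P1 * liftR S * emb2 P2 : Matrix (Fin d × Fin d) (Fin d × Fin d) A) p q
      = ∑ ab : Fin d × Fin d, S (ab.1, p.2) (q.1, ab.2) • (P1 p.1 ab.1 * P2 ab.2 q.2) := by
  simp only [Matrix.mul_apply, emb1, emb2, liftR, Matrix.of_apply, Matrix.map_apply,
    Fintype.sum_prod_type, ite_mul, zero_mul, mul_ite, mul_zero]
  simp only [Finset.sum_ite_eq, Finset.sum_ite_eq', Finset.mem_univ, if_true,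
    Finset.sum_mul]
  rw [Finset.sum_comm]
  simp only [Algebra.algebraMap_eq_smul_one, mul_smul_comm, smul_mul_assoc, mul_one, one_mul]
  simp only [Finset.sum_ite_eq', Finset.mem_univ, if_true]
  rw [Finset.sum_comm]

end SkAux
namespace SkAux
variable {d : ℕ} {A : Type} [Semiring A] [Algebra ℂ A]

lemma pair_smul_right (c : ℂ) (X Y : Matrix (Fin d × Fin d) (Fin d × Fin d) A) :
    pairB X (c • Y) = c • pairB X Y := by
  simp [pairB, Finset.smul_sum, mul_smul_comm]

lemma pair_lift_left (Z : Matrix (Fin d × Fin d) (Fin d × Fin d) ℂ)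
    (X Y : Matrix (Fin d × Fin d) (Fin d × Fin d) A) :
    pairB (liftR Z * X) Y = pairB X (liftR Zᵀ * Y) := by
  unfold pairB
  simp only [Matrix.mul_apply, liftR, Matrix.map_apply, Matrix.transpose_apply,
    Finset.sum_mul, Finset.mul_sum]
  conv_rhs => enter [2, p]; rw [Finset.sum_comm]
  conv_rhs => rw [Finset.sum_comm]
  conv_rhs => enter [2, r]; rw [Finset.sum_comm]
  refine Finset.sum_congr rfl fun r _ => Finset.sum_congr rfl fun q _ =>
    Finset.sum_congr rfl fun p _ => ?_
  rw [mul_assoc, Algebra.commutes, mul_assoc, ← Algebra.commutes]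

lemma pair_lift_right (Z : Matrix (Fin d × Fin d) (Fin d × Fin d) ℂ)
    (X Y : Matrix (Fin d × Fin d) (Fin d × Fin d) A) :
    pairB (X * liftR Z) Y = pairB X (Y * liftR Zᵀ) := by
  unfold pairB
  simp only [Matrix.mul_apply, liftR, Matrix.map_apply, Matrix.transpose_apply,
    Finset.sum_mul, Finset.mul_sum]
  conv_rhs => enter [2, p]; rw [Finset.sum_comm]
  refine Finset.sum_congr rfl fun p _ => Finset.sum_congr rfl fun r _ =>
    Finset.sum_congr rfl fun q _ => ?_
  rw [mul_assoc, Algebra.commutes, ← mul_assoc]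

end SkAux
namespace SkAux
variable {d : ℕ} {A : Type} [Semiring A] [Algebra ℂ A]

lemma conjP_apply (X : Matrix (Fin d × Fin d) (Fin d × Fin d) A) (p q : Fin d × Fin d) :
    (liftR (Pd d) * X * liftR (Pd d) : Matrix (Fin d × Fin d) (Fin d × Fin d) A) p q
      = X (p.2, p.1) (q.2, q.1) := by
  simp only [Matrix.mul_apply, Pd, liftR, Matrix.map_apply, Matrix.of_apply,
    apply_ite (algebraMap ℂ A), _root_.map_one, _root_.map_zero, Fintype.sum_prod_type, ite_and,
    ite_mul, mul_ite, one_mul, mul_one, zero_mul, mul_zero]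
  simp only [Finset.sum_ite_eq, Finset.sum_ite_eq', Finset.mem_univ, if_true,
    Finset.sum_const_zero]
  simp

end SkAux
namespace SkAux
variable {d : ℕ} {A : Type} [Semiring A] [Algebra ℂ A]

lemma conjP_mul (X Y : Matrix (Fin d × Fin d) (Fin d × Fin d) A) :
    (liftR (Pd d) * (X * Y) * liftR (Pd d) : Matrix (Fin d × Fin d) (Fin d × Fin d) A)
      = (liftR (Pd d) * X * liftR (Pd d)) * (liftR (Pd d) * Y * liftR (Pd d)) := by
  ext p q
  rw [conjP_apply, Matrix.mul_apply, Matrix.mul_apply]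
  simp only [conjP_apply]
  exact Fintype.sum_equiv (Equiv.prodComm _ _) _ _ fun r => rfl

lemma conjP_emb1 (M : Matrix (Fin d) (Fin d) A) :
    (liftR (Pd d) * emb1 M * liftR (Pd d) : Matrix (Fin d × Fin d) (Fin d × Fin d) A)
      = emb2 M := by
  ext p q
  simp [conjP_apply, emb1, emb2]

lemma conjP_emb2 (M : Matrix (Fin d) (Fin d) A) :
    (liftR (Pd d) * emb2 M * liftR (Pd d) : Matrix (Fin d × Fin d) (Fin d × Fin d) A)
      = emb1 M := by
  ext p q
  simp [conjP_apply, emb1, emb2]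

lemma conjP_liftR (S : Matrix (Fin d × Fin d) (Fin d × Fin d) ℂ)
    (h : Pd d * S * Pd d = S) :
    (liftR (Pd d) * liftR S * liftR (Pd d) : Matrix (Fin d × Fin d) (Fin d × Fin d) A)
      = liftR S := by
  rw [← liftR_mul, ← liftR_mul, h]

lemma pair_conjP (X Y : Matrix (Fin d × Fin d) (Fin d × Fin d) A) :
    pairB (liftR (Pd d) * X * liftR (Pd d)) (liftR (Pd d) * Y * liftR (Pd d))
      = pairB X Y := by
  unfold pairB
  simp only [conjP_apply]
  refine Fintype.sum_equiv (Equiv.prodComm _ _) _ _ fun p => ?_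
  exact Fintype.sum_equiv (Equiv.prodComm _ _) _ _ fun q => rfl

end SkAux
namespace SkAux
variable {d : ℕ} {A : Type} [Semiring A] [Algebra ℂ A]

lemma Jentry (S T : Matrix (Fin d × Fin d) (Fin d × Fin d) ℂ) (a b cc e : Fin d) :
    (pt2 S * pt1 T) (a, b) (cc, e)
      = ∑ p2 : Fin d, ∑ q1 : Fin d, S (a, p2) (q1, b) * T (cc, p2) (q1, e) := by
  simp only [Matrix.mul_apply, pt1, pt2, Matrix.of_apply, Fintype.sum_prod_type]
  exact Finset.sum_comm

lemma mul4_swap (x y z w : A) (h : y * z = z * y) :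
    x * y * (z * w) = x * z * (y * w) := by
  rw [mul_assoc, ← mul_assoc y z w, h, mul_assoc z y w, ← mul_assoc]

lemma core_pair (S T : Matrix (Fin d × Fin d) (Fin d × Fin d) ℂ) (c : ℂ)
    (hST : pt2 S * pt1 T = c • 1)
    (P1 P2 M1 M2 : Matrix (Fin d) (Fin d) A)
    (hPM : ∀ i j k l, P2 i j * M1 k l = M1 k l * P2 i j) :
    pairB (emb1 P1 * liftR S * emb2 P2) (emb1 M1 * liftR T * emb2 M2)
      = c • ((∑ i, ∑ j, P1 i j * M1 i j) * (∑ i, ∑ j, P2 i j * M2 i j)) := by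
  unfold pairB
  simp only [tri_apply]
  conv_lhs => enter [2, p, 2, q]; rw [Finset.sum_mul]; enter [2, ce]; rw [Finset.mul_sum]
  conv_lhs => enter [2, p, 2, q, 2, ce, 2, ab]
              rw [smul_mul_assoc, mul_smul_comm, smul_smul]
  conv_lhs => enter [2, p]; rw [Finset.sum_comm]
  conv_lhs => rw [Finset.sum_comm]
  conv_lhs => enter [2, ab, 2, p]; rw [Finset.sum_comm]
  conv_lhs => enter [2, ab]; rw [Finset.sum_comm]
  simp only [Fintype.sum_prod_type]
  conv_lhs => enter [2, a, 2, b, 2, cc, 2, e, 2, p1, 2, p2]; rw [Finset.sum_comm]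
  conv_lhs => enter [2, a, 2, b, 2, cc, 2, e, 2, p1]; rw [Finset.sum_comm]
  conv_lhs => enter [2, a, 2, b, 2, cc, 2, e, 2, p1, 2, q2, 2, p2]
              rw [← Finset.sum_smul]
  conv_lhs => enter [2, a, 2, b, 2, cc, 2, e, 2, p1, 2, q2]
              rw [← Finset.sum_smul, ← Jentry S T a b cc e, hST]
  simp only [Matrix.smul_apply, Matrix.one_apply, smul_eq_mul, mul_ite, mul_one,
    mul_zero, ite_smul, zero_smul, Prod.mk.injEq, ite_and, Finset.sum_ite_irrel,
    Finset.sum_const_zero, Finset.sum_ite_eq, Finset.mem_univ, if_true]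
  conv_lhs => enter [2, a, 2, b, 2, p1, 2, q2]
              rw [mul4_swap (P1 p1 a) (P2 b q2) (M1 p1 a) (M2 b q2) (hPM b q2 p1 a)]
  simp only [← Finset.smul_sum]
  congr 1
  conv_lhs => enter [2, a]; rw [Finset.sum_comm]
  conv_lhs => enter [2, a, 2, p1, 2, b]; rw [← Finset.mul_sum]
  conv_lhs => enter [2, a, 2, p1]; rw [← Finset.mul_sum]
  conv_lhs => enter [2, a]; rw [← Finset.sum_mul]
  conv_lhs => rw [← Finset.sum_mul]
  rw [Finset.sum_comm]

end SkAux
namespace SkAux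
variable {d : ℕ}

lemma swap_smul_one {n : Type} [Fintype n] [DecidableEq n]
    (S T : Matrix n n ℂ) (c : ℂ) (hc : c ≠ 0) (h : S * T = c • 1) :
    T * S = c • 1 := by
  have h1 : S * (c⁻¹ • T) = 1 := by
    rw [Matrix.mul_smul, h, smul_smul, inv_mul_cancel₀ hc, one_smul]
  have h2 : (c⁻¹ • T) * S = 1 := mul_eq_one_comm.mp h1
  calc T * S = c • ((c⁻¹ • T) * S) := by
        rw [Matrix.smul_mul, smul_smul, mul_inv_cancel₀ hc, one_smul]
    _ = c • 1 := by rw [h2]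

section Transport
variable {A1 A2 : Type} [Semiring A1] [Algebra ℂ A1] [Semiring A2] [Algebra ℂ A2]
variable (f : A1 →+* A2)

lemma map_liftR (hf : ∀ c : ℂ, f (algebraMap ℂ A1 c) = algebraMap ℂ A2 c)
    (S : Matrix (Fin d × Fin d) (Fin d × Fin d) ℂ) :
    (liftR S : Matrix (Fin d × Fin d) (Fin d × Fin d) A1).map f = liftR S := by
  ext p q
  simp [liftR, hf]

lemma map_emb1 (M : Matrix (Fin d) (Fin d) A1) :
    (emb1 M).map f = emb1 (M.map f) := by
  ext p q
  simp [emb1, apply_ite f]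

lemma map_emb2 (M : Matrix (Fin d) (Fin d) A1) :
    (emb2 M).map f = emb2 (M.map f) := by
  ext p q
  simp [emb2, apply_ite f]

end Transport
end SkAux

open SkAux

/-- (Sklyanin.) Given an R-matrix which satisfies the Yang–Baxter equation and is
symmetric, unitary and crossing unitary, and representations `𝒯⁺`, `𝒯⁻` of the right
and left reflection algebras, the transfer matrices
`t(λ) = Σ_{α,β} 𝒯⁺(λ)_{αβ} ⊗ 𝒯⁻(λ)_{βα}` form a commutative family. -/
theorem transfer_matrices_commute (d mp mm : ℕ) (hd : 0 < d) (hmp : 0 < mp) (hmm : 0 < mm)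
    (η : ℂ) (R : ℂ → Matrix (Fin d × Fin d) (Fin d × Fin d) ℂ) (ρ ρt : ℂ → ℂ)
    (hybe : ∀ lam mu nu : ℂ,
      r12 (R (lam - mu)) * r13 (R (lam - nu)) * r23 (R (mu - nu)) =
        r23 (R (mu - nu)) * r13 (R (lam - nu)) * r12 (R (lam - mu)))
    (hsymP : ∀ lam : ℂ, Pd d * R lam * Pd d = R lam)
    (hsymT : ∀ lam : ℂ, pt2 (pt1 (R lam)) = R lam)
    (hρ : ∀ lam : ℂ, ρ lam ≠ 0) (hρt : ∀ lam : ℂ, ρt lam ≠ 0)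
    (huni : ∀ lam : ℂ, R lam * R (-lam) = ρ lam • 1)
    (hcross : ∀ lam : ℂ, pt1 (R lam) * pt1 (R (-lam - 2 * η)) = ρt lam • 1)
    (𝒯m : ℂ → Matrix (Fin d) (Fin d) (Matrix (Fin mm) (Fin mm) ℂ))
    (𝒯p : ℂ → Matrix (Fin d) (Fin d) (Matrix (Fin mp) (Fin mp) ℂ))
    (hm : LeftRefl R 𝒯m) (hp : RightRefl η R 𝒯p)
    (t : ℂ → Matrix (Fin mp × Fin mm) (Fin mp × Fin mm) ℂ)
    (ht : ∀ lam : ℂ, t lam = ∑ α : Fin d, ∑ β : Fin d, (𝒯p lam α β) ⊗ₖ (𝒯m lam β α)) :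
    ∀ lam mu : ℂ, t lam * t mu = t mu * t lam := by
  intro lam mu
  -- symmetric R-matrix facts
  have Rsymm : ∀ x : ℂ, (R x)ᵀ = R x := by
    intro x
    have h := hsymT x
    rwa [pt2_pt1] at h
  have hpt12 : ∀ x : ℂ, pt2 (R x) = pt1 (R x) := by
    intro x
    conv_lhs => rw [← hsymT x]
    rw [pt2_pt2]
  -- the two ring homs into the common algebra
  let fp : Matrix (Fin mp) (Fin mp) ℂ →+* Matrix (Fin mp × Fin mm) (Fin mp × Fin mm) ℂ :=
    { toFun := fun X => X ⊗ₖ (1 : Matrix (Fin mm) (Fin mm) ℂ)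
      map_one' := Matrix.one_kronecker_one
      map_mul' := fun X Y => by rw [← Matrix.mul_kronecker_mul, one_mul]
      map_zero' := Matrix.zero_kronecker _
      map_add' := fun X Y => Matrix.add_kronecker _ _ _ }
  let fm : Matrix (Fin mm) (Fin mm) ℂ →+* Matrix (Fin mp × Fin mm) (Fin mp × Fin mm) ℂ :=
    { toFun := fun Y => (1 : Matrix (Fin mp) (Fin mp) ℂ) ⊗ₖ Y
      map_one' := Matrix.one_kronecker_one
      map_mul' := fun X Y => by rw [← Matrix.mul_kronecker_mul, one_mul]
      map_zero' := Matrix.kronecker_zero _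
      map_add' := fun X Y => Matrix.kronecker_add _ _ _ }
  have hfp : ∀ c : ℂ, fp (algebraMap ℂ _ c) = algebraMap ℂ _ c := by
    intro c
    show (algebraMap ℂ _ c) ⊗ₖ (1 : Matrix (Fin mm) (Fin mm) ℂ) = _
    rw [Algebra.algebraMap_eq_smul_one, Algebra.algebraMap_eq_smul_one,
      Matrix.smul_kronecker, Matrix.one_kronecker_one]
  have hfm : ∀ c : ℂ, fm (algebraMap ℂ _ c) = algebraMap ℂ _ c := by
    intro c
    show (1 : Matrix (Fin mp) (Fin mp) ℂ) ⊗ₖ (algebraMap ℂ _ c) = _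
    rw [Algebra.algebraMap_eq_smul_one, Algebra.algebraMap_eq_smul_one,
      Matrix.kronecker_smul, Matrix.one_kronecker_one]
  have hcmm : ∀ (X : Matrix (Fin mp) (Fin mp) ℂ) (Y : Matrix (Fin mm) (Fin mm) ℂ),
      fp X * fm Y = fm Y * fp X := by
    intro X Y
    show (X ⊗ₖ 1) * (1 ⊗ₖ Y) = (1 ⊗ₖ Y) * (X ⊗ₖ 1)
    rw [← Matrix.mul_kronecker_mul, ← Matrix.mul_kronecker_mul, one_mul, mul_one,
      one_mul, mul_one]
  -- lifted matrices
  set pL := (𝒯p lam).map fp with hpL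
  set pM := (𝒯p mu).map fp with hpM2
  set mL := (𝒯m lam).map fm with hmL
  set mM := (𝒯m mu).map fm with hmM2
  -- transported reflection equations
  have hpA : liftR (R (-lam + mu)) * emb1 pLᵀ * liftR (R (-lam - mu - 2*η)) * emb2 pMᵀ
      = emb2 pMᵀ * liftR (R (-lam - mu - 2*η)) * emb1 pLᵀ * liftR (R (-lam + mu)) := by
    have h := congrArg (fun M => M.map fp) (hp lam mu)
    simpa only [Matrix.map_mul, map_liftR fp hfp, map_emb1, map_emb2,
      Matrix.transpose_map] using h
  have hmA : liftR (R (lam - mu)) * emb1 mL * liftR (R (lam + mu)) * emb2 mM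
      = emb2 mM * liftR (R (lam + mu)) * emb1 mL * liftR (R (lam - mu)) := by
    have h := congrArg (fun M => M.map fm) (hm lam mu)
    simpa only [Matrix.map_mul, map_liftR fm hfm, map_emb1, map_emb2] using h
  -- t as double sums in the common algebra
  have hkron : ∀ (X : Matrix (Fin mp) (Fin mp) ℂ) (Y : Matrix (Fin mm) (Fin mm) ℂ),
      X ⊗ₖ Y = fp X * fm Y := by
    intro X Y
    show _ = (X ⊗ₖ 1) * (1 ⊗ₖ Y)
    rw [← Matrix.mul_kronecker_mul, one_mul, mul_one]
  have htL : t lam = ∑ i : Fin d, ∑ j : Fin d, pLᵀ i j * mL i j := by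
    rw [ht lam, Finset.sum_comm]
    refine Finset.sum_congr rfl fun i _ => Finset.sum_congr rfl fun j _ => ?_
    rw [hkron]
    rfl
  have htM : t mu = ∑ i : Fin d, ∑ j : Fin d, pMᵀ i j * mM i j := by
    rw [ht mu, Finset.sum_comm]
    refine Finset.sum_congr rfl fun i _ => Finset.sum_congr rfl fun j _ => ?_
    rw [hkron]
    rfl
  -- crossing unitarity in the form needed for the pairing
  have hRv : pt1 (R (-lam - mu - 2*η)) * pt1 (R (lam + mu)) = ρt (lam + mu) • 1 := by
    have h := hcross (lam + mu)
    rw [show -(lam + mu) - 2*η = -lam - mu - 2*η from by ring] at h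
    exact swap_smul_one _ _ _ (hρt (lam + mu)) h
  have hST : pt2 (R (-lam - mu - 2*η)) * pt1 (R (lam + mu)) = ρt (lam + mu) • 1 := by
    rw [hpt12]
    exact hRv
  -- the commutation of the two families of entries
  have hc1 : ∀ i j k l, pMᵀ i j * mL k l = mL k l * pMᵀ i j := fun i j k l => hcmm _ _
  have hc2 : ∀ i j k l, pLᵀ i j * mM k l = mM k l * pLᵀ i j := fun i j k l => hcmm _ _
  -- the two main pairing evaluations
  have key1 : pairB (emb1 pLᵀ * liftR (R (-lam - mu - 2*η)) * emb2 pMᵀ)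
      (emb1 mL * liftR (R (lam + mu)) * emb2 mM)
      = ρt (lam + mu) • (t lam * t mu) := by
    rw [core_pair _ _ _ hST pLᵀ pMᵀ mL mM hc1, htL, htM]
  have key2 : pairB (emb1 pMᵀ * liftR (R (-lam - mu - 2*η)) * emb2 pLᵀ)
      (emb1 mM * liftR (R (lam + mu)) * emb2 mL)
      = ρt (lam + mu) • (t mu * t lam) := by
    rw [core_pair _ _ _ hST pMᵀ pLᵀ mM mL hc2, htL, htM]
  -- unitarity facts
  have hu1 : R (lam - mu) * R (-lam + mu) = ρ (lam - mu) • 1 := by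
    have h := huni (lam - mu)
    rwa [show -(lam - mu) = -lam + mu from by ring] at h
  have hu2 : R (-lam + mu) * R (lam - mu) = ρ (lam - mu) • 1 :=
    swap_smul_one _ _ _ (hρ (lam - mu)) hu1
  have e1 : (liftR (R (-lam + mu)) * liftR (R (lam - mu)) :
      Matrix (Fin d × Fin d) (Fin d × Fin d) (Matrix (Fin mp × Fin mm) (Fin mp × Fin mm) ℂ))
      = ρ (lam - mu) • 1 := by
    rw [← liftR_mul, hu2, liftR_smul_one]
  have e2 : (liftR (R (lam - mu)) * liftR (R (-lam + mu)) :
      Matrix (Fin d × Fin d) (Fin d × Fin d) (Matrix (Fin mp × Fin mm) (Fin mp × Fin mm) ℂ))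
      = ρ (lam - mu) • 1 := by
    rw [← liftR_mul, hu1, liftR_smul_one]
  -- reflection equations, re-associated
  have hpa2 : liftR (R (-lam + mu)) * (emb1 pLᵀ * liftR (R (-lam - mu - 2*η)) * emb2 pMᵀ)
      = emb2 pMᵀ * liftR (R (-lam - mu - 2*η)) * emb1 pLᵀ * liftR (R (-lam + mu)) := by
    have h := hpA
    simp only [mul_assoc] at h ⊢
    exact h
  have hma2 : liftR (R (lam - mu)) * (emb1 mL * liftR (R (lam + mu)) * emb2 mM)
      = emb2 mM * liftR (R (lam + mu)) * emb1 mL * liftR (R (lam - mu)) := by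
    have h := hmA
    simp only [mul_assoc] at h ⊢
    exact h
  -- conjugation by the permutation operator
  have hH' : liftR (Pd d) * (emb1 pMᵀ * liftR (R (-lam - mu - 2*η)) * emb2 pLᵀ) * liftR (Pd d)
      = emb2 pMᵀ * liftR (R (-lam - mu - 2*η)) * emb1 pLᵀ := by
    rw [conjP_mul, conjP_mul, conjP_emb1, conjP_emb2, conjP_liftR _ (hsymP (-lam - mu - 2*η))]
  have hW' : liftR (Pd d) * (emb1 mM * liftR (R (lam + mu)) * emb2 mL) * liftR (Pd d)
      = emb2 mM * liftR (R (lam + mu)) * emb1 mL := by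
    rw [conjP_mul, conjP_mul, conjP_emb1, conjP_emb2, conjP_liftR _ (hsymP (lam + mu))]
  -- the main chain
  have main : ρ (lam - mu) • (ρt (lam + mu) • (t lam * t mu))
      = ρ (lam - mu) • (ρt (lam + mu) • (t mu * t lam)) := by
    calc ρ (lam - mu) • (ρt (lam + mu) • (t lam * t mu))
        = ρ (lam - mu) • pairB (emb1 pLᵀ * liftR (R (-lam - mu - 2*η)) * emb2 pMᵀ)
            (emb1 mL * liftR (R (lam + mu)) * emb2 mM) := by rw [key1]
      _ = pairB (emb1 pLᵀ * liftR (R (-lam - mu - 2*η)) * emb2 pMᵀ)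
            (ρ (lam - mu) • (emb1 mL * liftR (R (lam + mu)) * emb2 mM)) := by
            rw [pair_smul_right]
      _ = pairB (emb1 pLᵀ * liftR (R (-lam - mu - 2*η)) * emb2 pMᵀ)
            (liftR (R (-lam + mu)) * (liftR (R (lam - mu))
              * (emb1 mL * liftR (R (lam + mu)) * emb2 mM))) := by
            rw [← mul_assoc, e1, Matrix.smul_mul, one_mul]
      _ = pairB (liftR (R (-lam + mu))
              * (emb1 pLᵀ * liftR (R (-lam - mu - 2*η)) * emb2 pMᵀ))
            (liftR (R (lam - mu)) * (emb1 mL * liftR (R (lam + mu)) * emb2 mM)) := by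
            rw [pair_lift_left, Rsymm]
      _ = pairB (emb2 pMᵀ * liftR (R (-lam - mu - 2*η)) * emb1 pLᵀ * liftR (R (-lam + mu)))
            (emb2 mM * liftR (R (lam + mu)) * emb1 mL * liftR (R (lam - mu))) := by
            rw [hpa2, hma2]
      _ = pairB (emb2 pMᵀ * liftR (R (-lam - mu - 2*η)) * emb1 pLᵀ)
            (emb2 mM * liftR (R (lam + mu)) * emb1 mL * liftR (R (lam - mu))
              * liftR (R (-lam + mu))) := by
            rw [pair_lift_right, Rsymm]
      _ = pairB (emb2 pMᵀ * liftR (R (-lam - mu - 2*η)) * emb1 pLᵀ)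
            (ρ (lam - mu) • (emb2 mM * liftR (R (lam + mu)) * emb1 mL)) := by
            rw [mul_assoc (emb2 mM * liftR (R (lam + mu)) * emb1 mL), e2,
              Matrix.mul_smul, mul_one]
      _ = ρ (lam - mu) • pairB (emb2 pMᵀ * liftR (R (-lam - mu - 2*η)) * emb1 pLᵀ)
            (emb2 mM * liftR (R (lam + mu)) * emb1 mL) := by
            rw [pair_smul_right]
      _ = ρ (lam - mu) • pairB
            (liftR (Pd d) * (emb1 pMᵀ * liftR (R (-lam - mu - 2*η)) * emb2 pLᵀ) * liftR (Pd d))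
            (liftR (Pd d) * (emb1 mM * liftR (R (lam + mu)) * emb2 mL) * liftR (Pd d)) := by
            rw [hH', hW']
      _ = ρ (lam - mu) • pairB (emb1 pMᵀ * liftR (R (-lam - mu - 2*η)) * emb2 pLᵀ)
            (emb1 mM * liftR (R (lam + mu)) * emb2 mL) := by
            rw [pair_conjP]
      _ = ρ (lam - mu) • (ρt (lam + mu) • (t mu * t lam)) := by rw [key2]
  -- cancel the nonzero scalars
  have hne : ρ (lam - mu) * ρt (lam + mu) ≠ 0 :=
    mul_ne_zero (hρ (lam - mu)) (hρt (lam + mu))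
  have main2 := congrArg (fun z => (ρ (lam - mu) * ρt (lam + mu))⁻¹ • z) main
  have hcc : (ρt (lam + mu))⁻¹ * (ρ (lam - mu))⁻¹ * (ρ (lam - mu) * ρt (lam + mu)) = 1 := by
    field_simp [hρ (lam - mu), hρt (lam + mu)]
  simpa [smul_smul, hcc] using main2

end
end

section
/- (Open-chain Hamiltonian from the boundary transfer matrix.) Let d ≥ 1, L ≥ 2, and let R : ℂ → End(ℂ^d ⊗ ℂ^d) be differentiable at 0, with R(0) = P and R(λ) invertible for λ in a neighbourhood of 0. Define the monodromy matrix T(λ) = R_{0L}(λ)···R_{01}(λ) acting on ℂ^d (auxiliary space, labelled 0) tensored with (ℂ^d)^{⊗L}. Let K⁺, K⁻ : ℂ → M_d(ℂ) be differentiable at 0 with tr K⁺(λ) = 1 for all λ and K⁻(0) = I_d. Define t(λ) = tr₀[K⁺₀(λ)·T(λ)·K⁻₀(λ)·T(−λ)⁻¹] (partial trace over the auxiliary space 0), an operator on (ℂ^d)^{⊗L}. Then t(0) = Id, t is differentiable at 0, and t′(0) = 2ℋ, where ℋ = Σ_{j=1}^{L−1} H_{j,j+1} + (1/2)·(dK⁻/dλ)(0)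 acting at site 1 + tr₀[K⁺₀(0)·H_{L,0}], with H_{jk} = (d/dλ)(P R)_{jk}(λ)|_{λ=0} acting on the tensor factors j and k. -/
noncomputable section

open Complex Matrix Filter

/-- `R_{0j}`: an operator on ℂ^d ⊗ ℂ^d acting on the auxiliary space 0 (first factor)
and the chain site j (second factor) of ℂ^d ⊗ (ℂ^d)^{⊗L}. -/
def embR0 {d L : ℕ} (j : Fin L) (M : Matrix (Fin d × Fin d) (Fin d × Fin d) ℂ) :
    Matrix (Fin d × (Fin L → Fin d)) (Fin d × (Fin L → Fin d)) ℂ :=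
  Matrix.of fun p q =>
    M (p.1, p.2 j) (q.1, q.2 j) * (if p.2 = Function.update q.2 j (p.2 j) then 1 else 0)

/-- An operator on ℂ^d ⊗ ℂ^d acting on the chain site j (first factor) and the auxiliary
space 0 (second factor). -/
def embSA {d L : ℕ} (j : Fin L) (M : Matrix (Fin d × Fin d) (Fin d × Fin d) ℂ) :
    Matrix (Fin d × (Fin L → Fin d)) (Fin d × (Fin L → Fin d)) ℂ :=
  Matrix.of fun p q =>
    M (p.2 j, p.1) (q.2 j, q.1) * (if p.2 = Function.update q.2 j (p.2 j) then 1 else 0)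

/-- A two-site operator acting on the chain sites j and k of (ℂ^d)^{⊗L}. -/
def emb2c {d L : ℕ} (j k : Fin L) (M : Matrix (Fin d × Fin d) (Fin d × Fin d) ℂ) :
    Matrix (Fin L → Fin d) (Fin L → Fin d) ℂ :=
  Matrix.of fun s s' =>
    M (s j, s k) (s' j, s' k) *
      (if s = Function.update (Function.update s' j (s j)) k (s k) then 1 else 0)

/-- A one-site operator acting on the chain site j of (ℂ^d)^{⊗L}. -/
def emb1c {d L : ℕ} (j : Fin L) (M : Matrix (Fin d) (Fin d) ℂ) :
    Matrix (Fin L → Fin d) (Fin L → Fin d) ℂ :=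
  Matrix.of fun s s' => M (s j) (s' j) * (if s = Function.update s' j (s j) then 1 else 0)

/-- A d×d matrix acting on the auxiliary space 0 of ℂ^d ⊗ (ℂ^d)^{⊗L}. -/
def embK {d L : ℕ} (K : Matrix (Fin d) (Fin d) ℂ) :
    Matrix (Fin d × (Fin L → Fin d)) (Fin d × (Fin L → Fin d)) ℂ :=
  Matrix.of fun p q => K p.1 q.1 * (if p.2 = q.2 then 1 else 0)

/-- Partial trace over the auxiliary space 0. -/
def ptr0 {d L : ℕ} (M : Matrix (Fin d × (Fin L → Fin d)) (Fin d × (Fin L → Fin d)) ℂ) :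
    Matrix (Fin L → Fin d) (Fin L → Fin d) ℂ :=
  Matrix.of fun s s' => ∑ a : Fin d, M (a, s) (a, s')

/-- The monodromy matrix `T(λ) = R_{0L}(λ)···R_{01}(λ)` on ℂ^d ⊗ (ℂ^d)^{⊗L}. -/
def Tmono (d L : ℕ) (R : ℂ → Matrix (Fin d × Fin d) (Fin d × Fin d) ℂ) (lam : ℂ) :
    Matrix (Fin d × (Fin L → Fin d)) (Fin d × (Fin L → Fin d)) ℂ :=
  ((List.ofFn fun j : Fin L => embR0 j (R lam)).reverse).prod

/-!
At `λ = 0` every factor `R_{0j}(0)` is the swap of the auxiliary space with site `j`. Treating the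
auxiliary space as an extra site `L` of a chain of `L + 1` sites, `T(0)` is therefore the matrix
of a relabelling of sites, and conjugating a local operator by it just relabels the sites it acts
on. Peeling off one factor at a time, the product rule gives `T'(0) = D T(0)` with
`D = Σ_j H_{j,j+1}`, where `H_{L-1,L}` couples the last site to the auxiliary space.
Since `(T(-λ)⁻¹)'(0) = T(0)⁻¹ T'(0) T(0)⁻¹`, differentiating `t` gives
`t'(0) = tr₀ K⁺'(0) + 2 tr₀[K⁺(0) D] + tr₀[K⁺(0) T(0) K⁻'(0) T(0)⁻¹]`. The first term vanishes
because `tr K⁺ ≡ 1`, and `T(0)` moves `K⁻'(0)` from the auxiliary space to the first site.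
-/

open scoped Kronecker

namespace OpenChain

open Equiv Finset

lemma _root_.Matrix.permMatrix_mul_eq_submatrix_mul {n : Type*} [Fintype n] [DecidableEq n]
    (σ : Perm n) (M : Matrix n n ℂ) : σ.permMatrix ℂ * M = M.submatrix σ σ * σ.permMatrix ℂ := by
  rw [PEquiv.toMatrix_toPEquiv_mul, PEquiv.mul_toMatrix_toPEquiv, Matrix.submatrix_submatrix]
  simp

section Sites

variable {ι α : Type*}

def confPerm (π : Perm ι) : Perm (ι → α) := π.symm.arrowCongr (Equiv.refl α)

@[simp] lemma confPerm_apply (π : Perm ι) (s : ι → α) (w : ι) : confPerm π s w = s (π w) := by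
  simp [confPerm]

lemma confPerm_mul (π₁ π₂ : Perm ι) :
    confPerm (α := α) (π₁ * π₂) = confPerm π₂ * confPerm π₁ := by
  ext s w; simp

variable [DecidableEq ι] [Fintype ι] [DecidableEq α]

def twoSite (u v : ι) (M : Matrix (α × α) (α × α) ℂ) : Matrix (ι → α) (ι → α) ℂ :=
  Matrix.of fun s s' =>
    M (s u, s v) (s' u, s' v) * if ∀ w, w ≠ u → w ≠ v → s w = s' w then 1 else 0

def oneSite (u : ι) (K : Matrix α α ℂ) : Matrix (ι → α) (ι → α) ℂ :=
  Matrix.of fun s s' => K (s u) (s' u) * if ∀ w, w ≠ u → s w = s' w then 1 else 0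

lemma twoSite_submatrix_confPerm (π : Perm ι) (u v : ι) (M : Matrix (α × α) (α × α) ℂ) :
    (twoSite u v M).submatrix (confPerm π) (confPerm π) = twoSite (π u) (π v) M := by
  ext s s'
  have : (∀ w, w ≠ u → w ≠ v → s (π w) = s' (π w)) ↔ ∀ w, w ≠ π u → w ≠ π v → s w = s' w :=
    π.forall_congr (by simp)
  simp [twoSite, this]

lemma oneSite_submatrix_confPerm (π : Perm ι) (u : ι) (K : Matrix α α ℂ) :
    (oneSite u K).submatrix (confPerm π) (confPerm π) = oneSite (π u) K := by
  ext s s'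
  have : (∀ w, w ≠ u → s (π w) = s' (π w)) ↔ ∀ w, w ≠ π u → s w = s' w :=
    π.forall_congr (by simp)
  simp [oneSite, this]

lemma twoSite_one (u v : ι) : twoSite u v (1 : Matrix (α × α) (α × α) ℂ) = 1 := by
  ext s s'
  have key : ((s u, s v) = (s' u, s' v) ∧ ∀ w, w ≠ u → w ≠ v → s w = s' w) ↔ s = s' := by
    refine ⟨fun ⟨huv, hrest⟩ => funext fun w => ?_, fun h => h ▸ ⟨rfl, fun _ _ _ => rfl⟩⟩
    obtain ⟨hu, hv⟩ := Prod.ext_iff.mp huv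
    by_cases hwu : w = u
    · exact hwu ▸ hu
    by_cases hwv : w = v
    · exact hwv ▸ hv
    exact hrest w hwu hwv
  simp only [twoSite, Matrix.of_apply, Matrix.one_apply, ite_zero_mul_ite_zero, mul_one]
  exact if_congr key rfl rfl

variable [Fintype α]

def sitePermMatrix : Perm ι →* Matrix (ι → α) (ι → α) ℂ where
  toFun π := (confPerm π).permMatrix ℂ
  map_one' := by
    have : confPerm (α := α) (1 : Perm ι) = 1 := by ext s w; simp
    rw [this, Matrix.permMatrix_one]
  map_mul' π₁ π₂ := by rw [confPerm_mul, Matrix.permMatrix_mul]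

lemma sitePermMatrix_mul_twoSite (π : Perm ι) (u v : ι) (M : Matrix (α × α) (α × α) ℂ) :
    sitePermMatrix π * twoSite u v M = twoSite (π u) (π v) M * sitePermMatrix π := by
  rw [sitePermMatrix, MonoidHom.coe_mk, OneHom.coe_mk, Matrix.permMatrix_mul_eq_submatrix_mul,
    twoSite_submatrix_confPerm]

lemma sitePermMatrix_mul_oneSite (π : Perm ι) (u : ι) (K : Matrix α α ℂ) :
    sitePermMatrix π * oneSite u K = oneSite (π u) K * sitePermMatrix π := by
  rw [sitePermMatrix, MonoidHom.coe_mk, OneHom.coe_mk, Matrix.permMatrix_mul_eq_submatrix_mul,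
    oneSite_submatrix_confPerm]

end Sites

section PermutationOperator

variable {ι : Type*} [DecidableEq ι] [Fintype ι] {d : ℕ}

lemma Pd_mul (M : Matrix (Fin d × Fin d) (Fin d × Fin d) ℂ) :
    Pd d * M = M.submatrix Prod.swap id := by
  ext p q
  have key : ∀ r : Fin d × Fin d, (p.1 = r.2 ∧ p.2 = r.1) ↔ r = p.swap := fun r => by
    rw [Prod.ext_iff]; exact ⟨fun h => ⟨h.2.symm, h.1.symm⟩, fun h => ⟨h.2.symm, h.1.symm⟩⟩
  simp [Matrix.mul_apply, Pd, key]

lemma Pd_mul_Pd : Pd d * Pd d = 1 := by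
  rw [Pd_mul]
  ext p q
  simp [Pd, Matrix.one_apply, Prod.ext_iff, and_comm]

lemma twoSite_Pd_mul (u v : ι) (M : Matrix (Fin d × Fin d) (Fin d × Fin d) ℂ) :
    twoSite u v (Pd d * M) = sitePermMatrix (swap u v) * twoSite u v M := by
  ext s s'
  have key : (∀ w, w ≠ u → w ≠ v → s (swap u v w) = s' w) ↔
      ∀ w, w ≠ u → w ≠ v → s w = s' w :=
    forall_congr' fun w => imp_congr_right fun hu => imp_congr_right fun hv => by
      rw [swap_apply_of_ne_of_ne hu hv]
  simp [sitePermMatrix, PEquiv.toMatrix_toPEquiv_mul, twoSite, Pd_mul, key]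

lemma twoSite_Pd (u v : ι) : twoSite u v (Pd d) = sitePermMatrix (swap u v) := by
  simpa [twoSite_one] using twoSite_Pd_mul u v 1

end PermutationOperator

lemma _root_.Function.eq_update_apply_self_iff {ι β : Type*} [DecidableEq ι] {f g : ι → β}
    {j : ι} : g = Function.update f j (g j) ↔ ∀ i, i ≠ j → g i = f i := by
  simp [Function.eq_update_iff]

lemma _root_.Function.eq_update_update_apply_self_iff {ι β : Type*} [DecidableEq ι]
    {f g : ι → β} {j k : ι} :
    g = Function.update (Function.update f j (g j)) k (g k) ↔
      ∀ i, i ≠ j → i ≠ k → g i = f i := by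
  rw [Function.eq_update_iff]
  simp only [true_and]
  refine forall_congr' fun i => ⟨fun h hj hk => ?_, fun h hk => ?_⟩
  · rw [h hk, Function.update_of_ne hj]
  · by_cases hj : i = j
    · rw [hj, Function.update_self]
    · rw [Function.update_of_ne hj]; exact h hj hk

variable {d L : ℕ}

/-- The auxiliary space becomes the extra site `Fin.last L`. -/
def chainEquiv (d L : ℕ) : Fin d × (Fin L → Fin d) ≃ (Fin (L + 1) → Fin d) :=
  Fin.snocEquiv fun _ => Fin d

@[simp] lemma chainEquiv_last (p : Fin d × (Fin L → Fin d)) :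
    chainEquiv d L p (Fin.last L) = p.1 := by
  simp [chainEquiv]

@[simp] lemma chainEquiv_castSucc (p : Fin d × (Fin L → Fin d)) (i : Fin L) :
    chainEquiv d L p i.castSucc = p.2 i := by
  simp [chainEquiv]

def toChain (d L : ℕ) :
    Matrix (Fin (L + 1) → Fin d) (Fin (L + 1) → Fin d) ℂ ≃ₐ[ℂ]
      Matrix (Fin d × (Fin L → Fin d)) (Fin d × (Fin L → Fin d)) ℂ :=
  Matrix.reindexAlgEquiv ℂ ℂ (chainEquiv d L).symm

@[simp] lemma toChain_apply (A : Matrix (Fin (L + 1) → Fin d) (Fin (L + 1) → Fin d) ℂ)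
    (p q : Fin d × (Fin L → Fin d)) :
    toChain d L A p q = A (chainEquiv d L p) (chainEquiv d L q) := by
  simp [toChain]

lemma toChain_twoSite_last_castSucc (j : Fin L) (M : Matrix (Fin d × Fin d) (Fin d × Fin d) ℂ) :
    toChain d L (twoSite (Fin.last L) j.castSucc M) = embR0 j M := by
  ext p q
  simp [twoSite, embR0, Fin.forall_fin_succ', Function.eq_update_apply_self_iff]

lemma toChain_twoSite_castSucc_last (j : Fin L) (M : Matrix (Fin d × Fin d) (Fin d × Fin d) ℂ) :
    toChain d L (twoSite j.castSucc (Fin.last L) M) = embSA j M := by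
  ext p q
  simp [twoSite, embSA, Fin.forall_fin_succ', Function.eq_update_apply_self_iff]

lemma toChain_twoSite_castSucc (j k : Fin L) (M : Matrix (Fin d × Fin d) (Fin d × Fin d) ℂ) :
    toChain d L (twoSite j.castSucc k.castSucc M) =
      (1 : Matrix (Fin d) (Fin d) ℂ) ⊗ₖ emb2c j k M := by
  ext p q
  simp [twoSite, emb2c, Fin.forall_fin_succ', Function.eq_update_update_apply_self_iff,
    Matrix.one_apply, (Fin.castSucc_ne_last _).symm, ite_and]

lemma toChain_oneSite_last (K : Matrix (Fin d) (Fin d) ℂ) :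
    toChain d L (oneSite (Fin.last L) K) = embK K := by
  ext p q
  simp [oneSite, embK, Fin.forall_fin_succ', funext_iff]

lemma toChain_oneSite_castSucc (j : Fin L) (K : Matrix (Fin d) (Fin d) ℂ) :
    toChain d L (oneSite j.castSucc K) = (1 : Matrix (Fin d) (Fin d) ℂ) ⊗ₖ emb1c j K := by
  ext p q
  simp [oneSite, emb1c, Fin.forall_fin_succ', Function.eq_update_apply_self_iff,
    Matrix.one_apply, (Fin.castSucc_ne_last _).symm, ite_and]

lemma ptr0_add (A B : Matrix (Fin d × (Fin L → Fin d)) (Fin d × (Fin L → Fin d)) ℂ) :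
    ptr0 (A + B) = ptr0 A + ptr0 B := by
  ext s s'
  simp [ptr0, sum_add_distrib]

lemma ptr0_smul (c : ℂ) (A : Matrix (Fin d × (Fin L → Fin d)) (Fin d × (Fin L → Fin d)) ℂ) :
    ptr0 (c • A) = c • ptr0 A := by
  ext s s'
  simp [ptr0, mul_sum]

lemma ptr0_sum {ι : Type*} (t : Finset ι)
    (A : ι → Matrix (Fin d × (Fin L → Fin d)) (Fin d × (Fin L → Fin d)) ℂ) :
    ptr0 (∑ j ∈ t, A j) = ∑ j ∈ t, ptr0 (A j) := by
  ext s s'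
  simp only [ptr0, Matrix.of_apply, Matrix.sum_apply]
  exact sum_comm

lemma ptr0_kronecker (K : Matrix (Fin d) (Fin d) ℂ)
    (N : Matrix (Fin L → Fin d) (Fin L → Fin d) ℂ) : ptr0 (K ⊗ₖ N) = K.trace • N := by
  ext s s'
  simp [ptr0, Matrix.trace, sum_mul]

lemma embK_eq_kronecker (K : Matrix (Fin d) (Fin d) ℂ) :
    embK K = K ⊗ₖ (1 : Matrix (Fin L → Fin d) (Fin L → Fin d) ℂ) := by
  ext p q
  simp [embK, Matrix.one_apply]

lemma ptr0_embK_mul_one_kronecker (K : Matrix (Fin d) (Fin d) ℂ)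
    (N : Matrix (Fin L → Fin d) (Fin L → Fin d) ℂ) :
    ptr0 (embK K * (1 ⊗ₖ N)) = K.trace • N := by
  rw [embK_eq_kronecker, ← Matrix.mul_kronecker_mul, mul_one, one_mul, ptr0_kronecker]

section Monodromy

/- Sites are addressed by natural numbers `j ≤ L` cast to `Fin (L + 1)`; the cast wraps around
above `L`, so every lemma below keeps its indices in that range. -/
open Fin.NatCast

variable (L) in
lemma natCast_fin_inj {a b : ℕ} (ha : a ≤ L) (hb : b ≤ L) :
    (a : Fin (L + 1)) = b ↔ a = b := by
  rw [Fin.ext_iff, Fin.val_cast_of_lt (by omega), Fin.val_cast_of_lt (by omega)]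

lemma natCast_eq_castSucc {j : ℕ} (hj : j < L) : (j : Fin (L + 1)) = Fin.castSucc ⟨j, hj⟩ :=
  Fin.ext (Fin.val_cast_of_lt (by omega))

variable (L) in
def partialMonodromy (R : ℂ → Matrix (Fin d × Fin d) (Fin d × Fin d) ℂ) (m : ℕ) (z : ℂ) :
    Matrix (Fin (L + 1) → Fin d) (Fin (L + 1) → Fin d) ℂ :=
  ((List.range m).map fun j : ℕ => twoSite (L : Fin (L + 1)) (j : Fin (L + 1)) (R z)).reverse.prod

variable (L) in
def monodromyPerm : ℕ → Perm (Fin (L + 1))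
  | 0 => 1
  | m + 1 => swap (L : Fin (L + 1)) m * monodromyPerm m

variable (L) in
/-- Among the first `m` sites, the last one is coupled to the auxiliary site `L`. -/
def nextSite (m j : ℕ) : Fin (L + 1) := ((if j + 1 < m then j + 1 else L : ℕ) : Fin (L + 1))

variable (L) in
def partialHamiltonian (H : Matrix (Fin d × Fin d) (Fin d × Fin d) ℂ) (m : ℕ) :
    Matrix (Fin (L + 1) → Fin d) (Fin (L + 1) → Fin d) ℂ :=
  ∑ j ∈ range m, twoSite (j : Fin (L + 1)) (nextSite L m j) H

lemma partialMonodromy_succ (R : ℂ → Matrix (Fin d × Fin d) (Fin d × Fin d) ℂ) (m : ℕ) (z : ℂ) :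
    partialMonodromy L R (m + 1) z =
      twoSite (L : Fin (L + 1)) (m : Fin (L + 1)) (R z) * partialMonodromy L R m z := by
  simp [partialMonodromy, List.range_succ]

lemma partialMonodromy_at_zero {R : ℂ → Matrix (Fin d × Fin d) (Fin d × Fin d) ℂ}
    (hR0 : R 0 = Pd d) (m : ℕ) :
    partialMonodromy L R m 0 = sitePermMatrix (monodromyPerm L m) := by
  induction m with
  | zero => simp [partialMonodromy, monodromyPerm]
  | succ m ih => rw [partialMonodromy_succ, ih, hR0, twoSite_Pd, monodromyPerm, map_mul]

lemma monodromyPerm_last {m : ℕ} (hm : 1 ≤ m) (hmL : m ≤ L) :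
    monodromyPerm L m (L : Fin (L + 1)) = 0 := by
  induction m with
  | zero => omega
  | succ m ih =>
    rw [monodromyPerm, Perm.mul_apply]
    rcases Nat.eq_zero_or_pos m with rfl | hm0
    · simp [monodromyPerm]
    · rw [ih hm0 (by omega), ← Nat.cast_zero,
        swap_apply_of_ne_of_ne ((natCast_fin_inj L (by omega) le_rfl).not.mpr (by omega))
          ((natCast_fin_inj L (by omega) (by omega)).not.mpr (by omega))]

lemma swap_apply_natCast_of_lt {m j : ℕ} (hm : m < L) (hj : j < m) :
    swap (L : Fin (L + 1)) m j = j :=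
  swap_apply_of_ne_of_ne ((natCast_fin_inj L (by omega) le_rfl).not.mpr (by omega))
    ((natCast_fin_inj L (by omega) (by omega)).not.mpr (by omega))

lemma swap_apply_nextSite {m j : ℕ} (hm : m < L) (hj : j < m) :
    swap (L : Fin (L + 1)) m (nextSite L m j) = nextSite L (m + 1) j := by
  unfold nextSite
  by_cases hjm : j + 1 < m
  · rw [if_pos hjm, if_pos (by omega)]
    exact swap_apply_natCast_of_lt hm hjm
  · rw [if_neg hjm, if_pos (by omega), swap_apply_left]
    congr 1; omega

lemma sitePermMatrix_swap_mul_partialHamiltonian (H : Matrix (Fin d × Fin d) (Fin d × Fin d) ℂ)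
    {m : ℕ} (hm : m < L) :
    sitePermMatrix (swap (L : Fin (L + 1)) m) * partialHamiltonian L H m =
      (∑ j ∈ range m, twoSite (j : Fin (L + 1)) (nextSite L (m + 1) j) H) *
        sitePermMatrix (swap (L : Fin (L + 1)) m) := by
  rw [partialHamiltonian, mul_sum, sum_mul]
  refine sum_congr rfl fun j hj => ?_
  rw [sitePermMatrix_mul_twoSite, swap_apply_natCast_of_lt hm (mem_range.mp hj),
    swap_apply_nextSite hm (mem_range.mp hj)]

lemma partialHamiltonian_succ (H : Matrix (Fin d × Fin d) (Fin d × Fin d) ℂ) (m : ℕ) :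
    partialHamiltonian L H (m + 1) =
      ∑ j ∈ range m, twoSite (j : Fin (L + 1)) (nextSite L (m + 1) j) H +
        twoSite (m : Fin (L + 1)) (L : Fin (L + 1)) H := by
  rw [partialHamiltonian, sum_range_succ, nextSite, if_neg (lt_irrefl _)]

lemma Tmono_eq_toChain (R : ℂ → Matrix (Fin d × Fin d) (Fin d × Fin d) ℂ) (z : ℂ) :
    Tmono d L R z = toChain d L (partialMonodromy L R L z) := by
  rw [Tmono, partialMonodromy, map_list_prod, List.map_reverse, List.map_map,
    ← List.map_coe_finRange_eq_range, List.map_map, List.ofFn_eq_map]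
  congr 2
  refine List.map_congr_left fun j _ => ?_
  simp only [Function.comp_apply, Fin.natCast_eq_last, Fin.coe_eq_castSucc,
    toChain_twoSite_last_castSucc]

variable (d L) in
def monodromyUnit : (Matrix (Fin d × (Fin L → Fin d)) (Fin d × (Fin L → Fin d)) ℂ)ˣ where
  val := toChain d L (sitePermMatrix (monodromyPerm L L))
  inv := toChain d L (sitePermMatrix (monodromyPerm L L)⁻¹)
  val_inv := by rw [← map_mul, ← map_mul, mul_inv_cancel, map_one, map_one]
  inv_val := by rw [← map_mul, ← map_mul, inv_mul_cancel, map_one, map_one]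

lemma Tmono_zero {R : ℂ → Matrix (Fin d × Fin d) (Fin d × Fin d) ℂ} (hR0 : R 0 = Pd d) :
    Tmono d L R 0 = monodromyUnit d L := by
  rw [Tmono_eq_toChain, partialMonodromy_at_zero hR0]
  rfl

lemma toChain_partialHamiltonian (hL : 1 ≤ L) (H : Matrix (Fin d × Fin d) (Fin d × Fin d) ℂ) :
    toChain d L (partialHamiltonian L H L) =
      (∑ j : Fin (L - 1),
        (1 : Matrix (Fin d) (Fin d) ℂ) ⊗ₖ
          emb2c ⟨j.val, by have := j.2; omega⟩ ⟨j.val + 1, by have := j.2; omega⟩ H) +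
      embSA ⟨L - 1, by omega⟩ H := by
  rw [partialHamiltonian, show range L = range (L - 1 + 1) by rw [Nat.sub_add_cancel hL],
    sum_range_succ, sum_range, map_add, map_sum]
  congr 1
  · refine sum_congr rfl fun j _ => ?_
    have hj := j.2
    rw [nextSite, if_pos (by omega), natCast_eq_castSucc (by omega),
      natCast_eq_castSucc (by omega), toChain_twoSite_castSucc]
  · rw [nextSite, if_neg (by omega), Fin.natCast_eq_last, natCast_eq_castSucc (by omega),
      toChain_twoSite_castSucc_last]

lemma toChain_monodromy_conj_embK (hL : 1 ≤ L) (K : Matrix (Fin d) (Fin d) ℂ) :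
    toChain d L (sitePermMatrix (monodromyPerm L L)) * embK K *
        toChain d L (sitePermMatrix (monodromyPerm L L)⁻¹) =
      (1 : Matrix (Fin d) (Fin d) ℂ) ⊗ₖ emb1c ⟨0, by omega⟩ K := by
  rw [← toChain_oneSite_last, ← Fin.natCast_eq_last, ← map_mul, ← map_mul,
    sitePermMatrix_mul_oneSite, monodromyPerm_last hL le_rfl, mul_assoc, ← map_mul,
    mul_inv_cancel, map_one, mul_one,
    show (0 : Fin (L + 1)) = Fin.castSucc ⟨0, by omega⟩ from rfl, toChain_oneSite_castSucc]

end Monodromy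

lemma ptr0_transfer_derivative (hL : 1 ≤ L) {K K' Kd : Matrix (Fin d) (Fin d) ℂ}
    (hK : K.trace = 1) (hK' : K'.trace = 0) (H : Matrix (Fin d × Fin d) (Fin d × Fin d) ℂ) :
    ptr0 (embK K' + (2 : ℂ) • (embK K * toChain d L (partialHamiltonian L H L)) +
        embK K * (toChain d L (sitePermMatrix (monodromyPerm L L)) * embK Kd *
          toChain d L (sitePermMatrix (monodromyPerm L L)⁻¹))) =
      (2 : ℂ) • ((∑ j : Fin (L - 1),
          emb2c ⟨j.val, by have := j.2; omega⟩ ⟨j.val + 1, by have := j.2; omega⟩ H) +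
        (2 : ℂ)⁻¹ • emb1c ⟨0, by omega⟩ Kd + ptr0 (embK K * embSA ⟨L - 1, by omega⟩ H)) := by
  rw [toChain_monodromy_conj_embK hL, toChain_partialHamiltonian hL, mul_add, mul_sum, ptr0_add,
    ptr0_add, ptr0_smul, ptr0_add, ptr0_sum, embK_eq_kronecker K', ptr0_kronecker, hK', zero_smul,
    zero_add]
  simp only [ptr0_embK_mul_one_kronecker, hK, one_smul]
  rw [smul_add, smul_add, smul_add, smul_smul, mul_inv_cancel₀ two_ne_zero, one_smul]
  abel

lemma _root_.Matrix.trace_eq_zero_of_hasDerivAt_apply {n : Type*} [Fintype n]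
    {K : ℂ → Matrix n n ℂ} {K' : Matrix n n ℂ} {x c : ℂ}
    (hK : ∀ a b, HasDerivAt (fun z => K z a b) (K' a b) x) (htr : ∀ z, (K z).trace = c) :
    K'.trace = 0 := by
  have h : HasDerivAt (fun z => (K z).trace) K'.trace x := HasDerivAt.fun_sum fun a _ => hK a a
  simp only [htr] at h
  exact h.unique (hasDerivAt_const x c)

section BanachAlgebra

variable {𝔸 : Type*} [NormedRing 𝔸] [NormedAlgebra ℂ 𝔸] [HasSummableGeomSeries 𝔸]

lemma hasDerivAt_ringInverse_comp_neg {T : ℂ → 𝔸} {T' : 𝔸} (u : 𝔸ˣ) (hT0 : T 0 = u)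
    (hT : HasDerivAt T T' 0) :
    HasDerivAt (fun z => Ring.inverse (T (-z))) (↑u⁻¹ * T' * ↑u⁻¹) 0 := by
  have hneg : HasDerivAt (fun z => T (-z)) (-T') 0 :=
    (hT.scomp_of_eq (0 : ℂ) (hasDerivAt_neg 0) neg_zero.symm).congr_deriv (by simp)
  have := (hasFDerivAt_ringInverse (𝕜 := ℂ) u).comp_hasDerivAt_of_eq (x := 0) hneg (by simp [hT0])
  simpa [mul_assoc, Function.comp_def] using this

lemma hasDerivAt_boundaryTransfer {T Kp Km : ℂ → 𝔸} {D Kp' Km' : 𝔸} (u : 𝔸ˣ) (hT0 : T 0 = u)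
    (hT : HasDerivAt T (D * u) 0) (hKp : HasDerivAt Kp Kp' 0) (hKm : HasDerivAt Km Km' 0)
    (hKm0 : Km 0 = 1) :
    HasDerivAt (fun z => Kp z * T z * Km z * Ring.inverse (T (-z)))
      (Kp' + (2 : ℂ) • (Kp 0 * D) + Kp 0 * (u * Km' * ↑u⁻¹)) 0 := by
  refine (((hKp.fun_mul hT).fun_mul hKm).fun_mul
    (hasDerivAt_ringInverse_comp_neg u hT0 hT)).congr_deriv ?_
  simp only [neg_zero, hT0, hKm0, Ring.inverse_unit, mul_one, add_mul, mul_assoc,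
    Units.mul_inv, Units.mul_inv_cancel_left, two_smul]
  abel

end BanachAlgebra

section Calculus

/- Any submultiplicative norm will do: derivatives of matrices are compared entrywise through
`Matrix.hasDerivAt_iff`. -/
attribute [local instance] Matrix.linftyOpNormedRing Matrix.linftyOpNormedAlgebra

lemma _root_.Matrix.hasDerivAt_iff {n : Type*} [Fintype n] [DecidableEq n]
    {f : ℂ → Matrix n n ℂ} {f' : Matrix n n ℂ} {x : ℂ} :
    HasDerivAt f f' x ↔ ∀ p q, HasDerivAt (fun z => f z p q) (f' p q) x :=
  hasDerivAt_iff_tendsto_slope.trans <| tendsto_pi_nhds.trans <| forall_congr' fun _ =>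
    tendsto_pi_nhds.trans <| forall_congr' fun _ => hasDerivAt_iff_tendsto_slope.symm

lemma hasDerivAt_twoSite {ι : Type*} [DecidableEq ι] [Fintype ι] (u v : ι)
    {M : ℂ → Matrix (Fin d × Fin d) (Fin d × Fin d) ℂ}
    {M' : Matrix (Fin d × Fin d) (Fin d × Fin d) ℂ} {x : ℂ} (hM : HasDerivAt M M' x) :
    HasDerivAt (fun z => twoSite u v (M z)) (twoSite u v M') x :=
  Matrix.hasDerivAt_iff.mpr fun _ _ => (Matrix.hasDerivAt_iff.mp hM _ _).mul_const _

lemma hasDerivAt_embK {K : ℂ → Matrix (Fin d) (Fin d) ℂ} {K' : Matrix (Fin d) (Fin d) ℂ} {x : ℂ}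
    (hK : HasDerivAt K K' x) : HasDerivAt (fun z => embK (L := L) (K z)) (embK K') x :=
  Matrix.hasDerivAt_iff.mpr fun _ _ => (Matrix.hasDerivAt_iff.mp hK _ _).mul_const _

lemma hasDerivAt_toChain {A : ℂ → Matrix (Fin (L + 1) → Fin d) (Fin (L + 1) → Fin d) ℂ}
    {A' : Matrix (Fin (L + 1) → Fin d) (Fin (L + 1) → Fin d) ℂ} {x : ℂ}
    (hA : HasDerivAt A A' x) : HasDerivAt (fun z => toChain d L (A z)) (toChain d L A') x :=
  Matrix.hasDerivAt_iff.mpr fun _ _ => by simpa using Matrix.hasDerivAt_iff.mp hA _ _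

lemma hasDerivAt_of_hasDerivAt_Pd_mul {R : ℂ → Matrix (Fin d × Fin d) (Fin d × Fin d) ℂ}
    {H : Matrix (Fin d × Fin d) (Fin d × Fin d) ℂ} {x : ℂ}
    (hH : ∀ p q, HasDerivAt (fun z => (Pd d * R z) p q) (H p q) x) :
    HasDerivAt R (Pd d * H) x :=
  Matrix.hasDerivAt_iff.mpr fun p q => by
    simpa [← mul_assoc, Pd_mul_Pd] using
      Matrix.hasDerivAt_iff.mp ((Matrix.hasDerivAt_iff.mpr hH).const_mul (Pd d)) p q

open Fin.NatCast in
lemma hasDerivAt_partialMonodromy {R : ℂ → Matrix (Fin d × Fin d) (Fin d × Fin d) ℂ}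
    {H : Matrix (Fin d × Fin d) (Fin d × Fin d) ℂ} (hR0 : R 0 = Pd d)
    (hR : HasDerivAt R (Pd d * H) 0) {m : ℕ} (hm : m ≤ L) :
    HasDerivAt (partialMonodromy L R m)
      (partialHamiltonian L H m * partialMonodromy L R m 0) 0 := by
  induction m with
  | zero =>
    have h1 : partialMonodromy L R 0 = fun _ => 1 := by ext1; simp [partialMonodromy]
    rw [h1, partialHamiltonian, sum_range_zero, zero_mul]
    exact hasDerivAt_const _ _
  | succ m ih =>
    rw [funext (partialMonodromy_succ R m)]
    refine ((hasDerivAt_twoSite (L : Fin (L + 1)) (m : Fin (L + 1)) hR).fun_mul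
      (ih (by omega))).congr_deriv ?_
    beta_reduce
    rw [hR0, twoSite_Pd_mul, twoSite_Pd, sitePermMatrix_mul_twoSite, swap_apply_left,
      swap_apply_right, ← mul_assoc, ← mul_assoc,
      sitePermMatrix_swap_mul_partialHamiltonian H (by omega), partialHamiltonian_succ]
    noncomm_ring

lemma hasDerivAt_Tmono {R : ℂ → Matrix (Fin d × Fin d) (Fin d × Fin d) ℂ}
    {H : Matrix (Fin d × Fin d) (Fin d × Fin d) ℂ} (hR0 : R 0 = Pd d)
    (hR : HasDerivAt R (Pd d * H) 0) :
    HasDerivAt (Tmono d L R) (toChain d L (partialHamiltonian L H L) * Tmono d L R 0) 0 := by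
  rw [funext (Tmono_eq_toChain R)]
  exact (hasDerivAt_toChain (hasDerivAt_partialMonodromy hR0 hR le_rfl)).congr_deriv
    (map_mul _ _ _)

lemma hasDerivAt_ptr0_transfer_apply {R : ℂ → Matrix (Fin d × Fin d) (Fin d × Fin d) ℂ}
    {H : Matrix (Fin d × Fin d) (Fin d × Fin d) ℂ} {Kp Km : ℂ → Matrix (Fin d) (Fin d) ℂ}
    {Kp' Km' : Matrix (Fin d) (Fin d) ℂ} (hR0 : R 0 = Pd d)
    (hH : ∀ p q, HasDerivAt (fun z => (Pd d * R z) p q) (H p q) 0)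
    (hKp : ∀ a b, HasDerivAt (fun z => Kp z a b) (Kp' a b) 0)
    (hKm : ∀ a b, HasDerivAt (fun z => Km z a b) (Km' a b) 0) (hKm0 : Km 0 = 1)
    (s s' : Fin L → Fin d) :
    HasDerivAt (fun z => ptr0 (embK (Kp z) * Tmono d L R z * embK (Km z) *
        (Tmono d L R (-z))⁻¹) s s')
      (ptr0 (embK Kp' + (2 : ℂ) • (embK (Kp 0) * toChain d L (partialHamiltonian L H L)) +
        embK (Kp 0) * (toChain d L (sitePermMatrix (monodromyPerm L L)) * embK Km' *
          toChain d L (sitePermMatrix (monodromyPerm L L)⁻¹))) s s') 0 := by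
  have hT := hasDerivAt_Tmono (L := L) hR0 (hasDerivAt_of_hasDerivAt_Pd_mul hH)
  rw [Tmono_zero hR0] at hT
  have hf := hasDerivAt_boundaryTransfer _ (Tmono_zero hR0) hT
    (hasDerivAt_embK (Matrix.hasDerivAt_iff.mpr hKp))
    (hasDerivAt_embK (Matrix.hasDerivAt_iff.mpr hKm))
    (by rw [hKm0, embK_eq_kronecker, Matrix.one_kronecker_one])
  simp only [Matrix.nonsing_inv_eq_ringInverse, ptr0, Matrix.of_apply]
  exact HasDerivAt.fun_sum fun a _ => Matrix.hasDerivAt_iff.mp hf (a, s) (a, s')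

end Calculus

end OpenChain

open OpenChain

/-- The boundary transfer matrix `t(λ) = tr₀[K⁺₀(λ)T(λ)K⁻₀(λ)T(−λ)⁻¹]` satisfies
`t(0) = Id` and `t′(0) = 2ℋ` with
`ℋ = Σ_{j=1}^{L−1} H_{j,j+1} + (1/2)(dK⁻/dλ)(0)|₁ + tr₀[K⁺₀(0)H_{L,0}]`,
where `H_{jk} = d/dλ (PR)_{jk}(λ)|_{λ=0}`. -/
theorem open_chain_hamiltonian (d L : ℕ) (hL : 2 ≤ L)
    (R : ℂ → Matrix (Fin d × Fin d) (Fin d × Fin d) ℂ)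
    (hR0 : R 0 = Pd d)
    (Kp Km : ℂ → Matrix (Fin d) (Fin d) ℂ)
    (hKpdiff : ∀ a b, DifferentiableAt ℂ (fun lam => Kp lam a b) 0)
    (htrKp : ∀ lam : ℂ, Matrix.trace (Kp lam) = 1)
    (hKm0 : Km 0 = 1)
    -- `H = d/dλ (P R(λ))|_{λ=0}`
    (H : Matrix (Fin d × Fin d) (Fin d × Fin d) ℂ)
    (hH : ∀ p q, HasDerivAt (fun lam => (Pd d * R lam) p q) (H p q) 0)
    -- `Kd = dK⁻/dλ(0)`
    (Kd : Matrix (Fin d) (Fin d) ℂ)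
    (hKd : ∀ a b, HasDerivAt (fun lam => Km lam a b) (Kd a b) 0)
    (ham : Matrix (Fin L → Fin d) (Fin L → Fin d) ℂ)
    (hham : ham =
      (∑ j : Fin (L - 1),
        emb2c ⟨j.val, by have := j.2; omega⟩ ⟨j.val + 1, by have := j.2; omega⟩ H) +
      (2 : ℂ)⁻¹ • emb1c ⟨0, by omega⟩ Kd +
      ptr0 (embK (Kp 0) * embSA ⟨L - 1, by omega⟩ H)) :
    ptr0 (embK (Kp 0) * Tmono d L R 0 * embK (Km 0) * (Tmono d L R 0)⁻¹) = 1 ∧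
    ∀ s s' : Fin L → Fin d,
      HasDerivAt
        (fun lam =>
          ptr0 (embK (Kp lam) * Tmono d L R lam * embK (Km lam) *
            (Tmono d L R (-lam))⁻¹) s s')
        (2 * ham s s') 0 := by
  have hKp : ∀ a b, HasDerivAt (fun z => Kp z a b) (deriv (fun z => Kp z a b) 0) 0 :=
    fun a b => (hKpdiff a b).hasDerivAt
  refine ⟨?_, fun s s' => ?_⟩
  · rw [hKm0, embK_eq_kronecker 1, Matrix.one_kronecker_one, mul_one, Tmono_zero hR0,
      ← Matrix.coe_units_inv, mul_assoc, Units.mul_inv, mul_one, embK_eq_kronecker,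
      ptr0_kronecker, htrKp, one_smul]
  refine (hasDerivAt_ptr0_transfer_apply (Kp' := Matrix.of _) hR0 hH hKp hKd hKm0 s s').congr_deriv
    ?_
  rw [ptr0_transfer_derivative (by omega) (htrKp 0)
    (Matrix.trace_eq_zero_of_hasDerivAt_apply (K' := Matrix.of _) hKp htrKp), hham]
  rfl
end
end
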